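/- Let 𝒮 = (S, →, s°) be a finite LTS and let ℬ_min be a stable partition of S such that every stable partition of S refines ℬ_min. Then the quotient LTS 𝒮_min of ℬ_min is branching bisimilar to 𝒮, i.e., the initial state s° of 𝒮 and the initial block B* of 𝒮_min are related by a branching bisimulation relation on the disjoint union of the two systems. -/

import Mathlib

/-- Transition relation of a labeled transition system over actions `Option A`,
where `none` is the silent action τ. -/
abbrev LTSRel (S A : Type) := S → Option A → S → Prop

/-- `s ⇒ s'`: a finite (possibly empty) sequence of τ-transitions. -/
def TauStar {S A : Type} (Tr : LTSRel S A) : S → S → Prop :=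
  Relation.ReflTransGen (fun s t => Tr s none t)

/-- `t̂ →(α) t'`: either `t̂ →α t'`, or `α = τ` and `t̂ = t'`. -/
def TransOpt {S A : Type} (Tr : LTSRel S A) (s : S) (α : Option A) (t : S) : Prop :=
  Tr s α t ∨ (α = none ∧ s = t)

/-- Branching bisimulation relation for an LTS. -/
def IsBB {S A : Type} (Tr : LTSRel S A) (R : S → S → Prop) : Prop :=
  (∀ s t, R s t → R t s) ∧
  ∀ s t α s', R s t → Tr s α s' →
    ∃ th t', TauStar Tr t th ∧ TransOpt Tr th α t' ∧ R s th ∧ R s' t'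

/-- A partition of the state space: pairwise disjoint nonempty blocks covering everything. -/
def IsPartition {S : Type} (Bl : Set (Set S)) : Prop :=
  (∀ B ∈ Bl, B.Nonempty) ∧ ⋃₀ Bl = Set.univ ∧
    ∀ B ∈ Bl, ∀ B' ∈ Bl, B ≠ B' → Disjoint B B'

/-- `C` refines `Bl`: every block of `C` is a subset of a block of `Bl`. -/
def Refines {S : Type} (C Bl : Set (Set S)) : Prop :=
  ∀ c ∈ C, ∃ B ∈ Bl, c ⊆ B

/-- `pos_α(B,B')`. -/
def posL {S A : Type} (Tr : LTSRel S A) (α : Option A) (B B' : Set S) : Set S :=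
  {s | s ∈ B ∧ ∃ sh ∈ B, ∃ s' ∈ B', TauStar Tr s sh ∧ Tr sh α s'}

/-- `neg_α(B,B')`. -/
def negL {S A : Type} (Tr : LTSRel S A) (α : Option A) (B B' : Set S) : Set S :=
  {s | s ∈ B ∧ ∀ sh ∈ B, ∀ s' ∈ B', ¬ TauStar Tr s sh ∨ ¬ Tr sh α s'}

/-- `B'` is a splitter of `B` for the action `α`. -/
def IsSplitterL {S A : Type} (Tr : LTSRel S A) (α : Option A) (B B' : Set S) : Prop :=
  (posL Tr α B B').Nonempty ∧ (negL Tr α B B').Nonempty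

/-- A stable partition: no block is a splitter of any block for any action. -/
def StablePartition {S A : Type} (Tr : LTSRel S A) (Bl : Set (Set S)) : Prop :=
  IsPartition Bl ∧ ∀ B ∈ Bl, ∀ B' ∈ Bl, ∀ α, ¬ IsSplitterL Tr α B B'

/-- Transition relation of the quotient LTS of a partition. -/
def quotTr {S A : Type} (Tr : LTSRel S A) (Bl : Set (Set S)) : LTSRel (↥Bl) A :=
  fun B α B' => (B ≠ B' ∨ α ≠ none) ∧ ∃ s ∈ B.1, ∃ s' ∈ B'.1, Tr s α s'

/-- Transition relation of the disjoint union of two LTS. -/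
def sumTr {S S' A : Type} (Tr : LTSRel S A) (Tr' : LTSRel S' A) : LTSRel (S ⊕ S') A :=
  fun x α y =>
    match x, y with
    | Sum.inl s, Sum.inl t => Tr s α t
    | Sum.inr s, Sum.inr t => Tr' s α t
    | _, _ => False

/-!
Every state is related to the block containing it. A step `s →α s'` of the original system is
matched in the quotient by the step from the block of `s` to the block of `s'`, or by stuttering
when this is a τ-step inside a block. Conversely, a quotient step `B →α B'` comes from some
`u →α u'` with `u ∈ B`, `u' ∈ B'`, so `u ∈ pos_α(B, B')`; stability forbids `s ∈ neg_α(B, B')`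
for any `s ∈ B`, which yields `s ⇒ ŝ →α s'` with `ŝ ∈ B` and `s' ∈ B'`.
-/

open Relation

theorem TauStar.sumTr_inl {S S' A : Type} {Tr : LTSRel S A} (Tr' : LTSRel S' A) {s t : S}
    (h : TauStar Tr s t) : TauStar (sumTr Tr Tr') (Sum.inl s) (Sum.inl t) :=
  ReflTransGen.lift Sum.inl (fun _ _ hst => hst) _ _ h

theorem TransOpt.sumTr_inr {S S' A : Type} (Tr : LTSRel S A) {Tr' : LTSRel S' A} {s t : S'}
    {α : Option A} (h : TransOpt Tr' s α t) :
    TransOpt (sumTr Tr Tr') (Sum.inr s) α (Sum.inr t) :=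
  h.imp_right fun ⟨hα, hst⟩ => ⟨hα, hst ▸ rfl⟩

theorem exists_tauStar_trans_of_not_isSplitterL {S A : Type} {Tr : LTSRel S A} {α : Option A}
    {B B' : Set S} (hsplit : ¬ IsSplitterL Tr α B B') {s u u' : S} (hs : s ∈ B) (hu : u ∈ B)
    (hu' : u' ∈ B') (htr : Tr u α u') :
    ∃ sh ∈ B, ∃ s' ∈ B', TauStar Tr s sh ∧ Tr sh α s' := by
  have hpos : (posL Tr α B B').Nonempty := ⟨u, hu, u, hu, u', hu', ReflTransGen.refl, htr⟩
  have hs_not_neg : s ∉ negL Tr α B B' := fun hneg => hsplit ⟨hpos, s, hneg⟩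
  simpa [negL, hs, not_or] using hs_not_neg

theorem exists_transOpt_quotTr {S A : Type} {Tr : LTSRel S A} {Bl : Set (Set S)}
    (hcover : ⋃₀ Bl = Set.univ) {B : Bl} {s s' : S} {α : Option A} (hs : s ∈ B.1)
    (htr : Tr s α s') : ∃ B' : Bl, s' ∈ B'.1 ∧ TransOpt (quotTr Tr Bl) B α B' := by
  obtain ⟨B', hB', hs'⟩ : s' ∈ ⋃₀ Bl := hcover ▸ Set.mem_univ s'
  refine ⟨⟨B', hB'⟩, hs', ?_⟩
  by_cases hstutter : B = ⟨B', hB'⟩ ∧ α = none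
  · exact Or.inr ⟨hstutter.2, hstutter.1⟩
  · exact Or.inl ⟨not_and_or.mp hstutter, s, hs, s', hs', htr⟩

def InBlock {S : Type} (Bl : Set (Set S)) : S ⊕ Bl → S ⊕ Bl → Prop
  | Sum.inl s, Sum.inr B => s ∈ B.1
  | _, _ => False

theorem StablePartition.isBB_inBlock {S A : Type} {Tr : LTSRel S A} {Bl : Set (Set S)}
    (hstable : StablePartition Tr Bl) :
    IsBB (sumTr Tr (quotTr Tr Bl)) (ReflGen (SymmGen (InBlock Bl))) := by
  refine ⟨fun _ _ h => symm h, ?_⟩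
  rintro x y α x' (_ | (hxy | hxy)) htr
  · exact ⟨x, x', ReflTransGen.refl, Or.inl htr, ReflGen.refl, ReflGen.refl⟩
  · obtain ⟨⟨s, rfl⟩, ⟨B, rfl⟩⟩ : (∃ s, x = Sum.inl s) ∧ ∃ B, y = Sum.inr B := by
      cases x <;> cases y <;> simp_all [InBlock]
    obtain ⟨s', rfl⟩ : ∃ s', x' = Sum.inl s' := by cases x' <;> simp_all [sumTr]
    obtain ⟨B', hs', hquot⟩ := exists_transOpt_quotTr hstable.1.2.1 hxy htr
    exact ⟨Sum.inr B, Sum.inr B', ReflTransGen.refl, hquot.sumTr_inr _,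
      ReflGen.single (SymmGen.of_rel hxy), ReflGen.single (SymmGen.of_rel hs')⟩
  · obtain ⟨⟨s, rfl⟩, ⟨B, rfl⟩⟩ : (∃ s, y = Sum.inl s) ∧ ∃ B, x = Sum.inr B := by
      cases x <;> cases y <;> simp_all [InBlock]
    obtain ⟨B', rfl⟩ : ∃ B', x' = Sum.inr B' := by cases x' <;> simp_all [sumTr]
    obtain ⟨-, u, hu, u', hu', hu_tr⟩ := htr
    obtain ⟨sh, hsh, s', hs', hs_sh, hsh_tr⟩ := exists_tauStar_trans_of_not_isSplitterL
      (hstable.2 B B.2 B' B'.2 α) hxy hu hu' hu_tr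
    exact ⟨Sum.inl sh, Sum.inl s', hs_sh.sumTr_inl _, Or.inl hsh_tr,
      ReflGen.single (SymmGen.of_rel_symm hsh), ReflGen.single (SymmGen.of_rel_symm hs')⟩

theorem stmt0_general {S A : Type} (Tr : LTSRel S A) (s0 : S)
    (Bmin : Set (Set S)) (hstable : StablePartition Tr Bmin)
    (Bstar : Set S) (hBstar : Bstar ∈ Bmin) (hs0 : s0 ∈ Bstar) :
    ∃ R : (S ⊕ ↥Bmin) → (S ⊕ ↥Bmin) → Prop,
      IsBB (sumTr Tr (quotTr Tr Bmin)) R ∧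
      R (Sum.inl s0) (Sum.inr ⟨Bstar, hBstar⟩) :=
  ⟨_, hstable.isBB_inBlock, ReflGen.single (SymmGen.of_rel hs0)⟩

/-- The quotient LTS of the coarsest stable partition is branching
bisimilar to the original LTS: the initial state and the initial block are related
by a branching bisimulation relation on the disjoint union of the two systems. -/
theorem stmt0 {S A : Type} [Finite S] [Finite A] (Tr : LTSRel S A) (s0 : S)
    (Bmin : Set (Set S)) (hstable : StablePartition Tr Bmin)
    (hcoarsest : ∀ C : Set (Set S), StablePartition Tr C → Refines C Bmin)
    (Bstar : Set S) (hBstar : Bstar ∈ Bmin) (hs0 : s0 ∈ Bstar) :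
    ∃ R : (S ⊕ ↥Bmin) → (S ⊕ ↥Bmin) → Prop,
      IsBB (sumTr Tr (quotTr Tr Bmin)) R ∧
      R (Sum.inl s0) (Sum.inr ⟨Bstar, hBstar⟩) :=
  stmt0_general Tr s0 Bmin hstable Bstar hBstar hs0
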